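/- In the triangular grid under rule 2 with a periodic configuration c (periodic of even period n in both coordinate directions): suppose u is stable for c under rule 2 and the connected component G[0,u] of inactive cells containing u is a finite tree; root this tree at u and let d be its depth (the maximum distance in the tree from u to a leaf). Then every cell of G[0,u] other than u is active after d applications of rule 2. -/

import Mathlib

/-- Neighbors in the triangular grid: cell `(i,j)` is adjacent to `(i-1,j)`,
`(i+1,j)`, and `(i,j-1)` if `i+j` is even, `(i,j+1)` if `i+j` is odd. -/
def triNbrs (p : ℤ × ℤ) : Finset (ℤ × ℤ) :=
  {(p.1 - 1, p.2), (p.1 + 1, p.2),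
   (p.1, if Even (p.1 + p.2) then p.2 - 1 else p.2 + 1)}

/-- Number of active neighbors of `p` in configuration `c`. -/
def triActCount (c : ℤ × ℤ → Bool) (p : ℤ × ℤ) : ℕ :=
  ((triNbrs p).filter (fun q => c q = true)).card

/-- The freezing totalistic rule on the triangular grid with activating set `I`. -/
def ruleT (I : Finset ℕ) (c : ℤ × ℤ → Bool) : ℤ × ℤ → Bool :=
  fun p => c p || decide (triActCount c p ∈ I)

/-- A cell `u` is stable for `c` under `F` if it is inactive and remains
inactive at all times. -/
def isStable (F : (ℤ × ℤ → Bool) → (ℤ × ℤ → Bool)) (c : ℤ × ℤ → Bool)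
    (u : ℤ × ℤ) : Prop :=
  c u = false ∧ ∀ t : ℕ, F^[t] c u = false

/-- A configuration is periodic of period `n` in both coordinate directions. -/
def Periodic (n : ℕ) (c : ℤ × ℤ → Bool) : Prop :=
  ∀ p : ℤ × ℤ, c (p.1 + n, p.2) = c p ∧ c (p.1, p.2 + n) = c p

/-- The graph `G[0]` on the inactive cells of `c`, with adjacency inherited
from the triangular grid. -/
def triG0 (c : ℤ × ℤ → Bool) : SimpleGraph (ℤ × ℤ) where
  Adj p q := p ≠ q ∧ c p = false ∧ c q = false ∧ (q ∈ triNbrs p ∨ p ∈ triNbrs q)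
  symm := ⟨fun p q h => ⟨h.1.symm, h.2.2.1, h.2.1, h.2.2.2.symm⟩⟩
  loopless := ⟨fun p h => h.1 rfl⟩

/-!
Root the tree at `u` and let `h w` be the height of `w`, the largest distance from `w` to a
vertex below it. A cell `w ≠ u` of the tree has three grid neighbours: its parent, its
children, and cells that are active from the start (an inactive neighbour would belong to
the tree). By induction, `w` becomes active exactly at time `h w + 1`: by then its children
are active, while its parent is still inactive, being either the stable root or of larger
height, so `w` sees exactly two active neighbours; and it cannot see two active neighbours
earlier, since one of them would be its parent or a child of maximal height. As
`1 ≤ dist u w` and `dist u w + h w ≤ d`, every such cell is active at time `d`.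
-/

namespace SimpleGraph

variable {V : Type*} {G : SimpleGraph V} {u w P q : V}

lemma Reachable.exists_adj_dist_add_one_eq (hw : G.Reachable u w) (hwu : w ≠ u) :
    ∃ P, G.Adj w P ∧ G.dist u P + 1 = G.dist u w := by
  obtain ⟨p, hp⟩ := hw.symm.exists_walk_length_eq_dist
  obtain ⟨P, hadj, p', rfl⟩ := p.exists_eq_cons_of_ne hwu
  have hle : G.dist P u ≤ p'.length := dist_le p'
  have htri := hadj.symm.reachable.dist_triangle_right u
  rw [dist_eq_one_iff_adj.2 hadj.symm] at htri
  rw [dist_comm, Walk.length_cons] at hp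
  rw [dist_comm] at hle
  exact ⟨P, hadj, by omega⟩

theorem IsAcyclic.eq_of_adj_of_dist_add_one_eq (hG : G.IsAcyclic) (hw : G.Reachable u w)
    {P₁ P₂ : V} (h₁ : G.Adj w P₁) (hd₁ : G.dist u P₁ + 1 = G.dist u w)
    (h₂ : G.Adj w P₂) (hd₂ : G.dist u P₂ + 1 = G.dist u w) : P₁ = P₂ := by
  classical
  obtain ⟨p, hp, -⟩ := hw.exists_path_of_dist
  suffices key : ∀ P, G.Adj w P → G.dist u P + 1 = G.dist u w → P = p.penultimate from
    (key P₁ h₁ hd₁).trans (key P₂ h₂ hd₂).symm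
  intro P hadj hd
  obtain ⟨q, hq, hql⟩ := (hw.trans hadj.reachable).exists_path_of_dist
  have hwq : w ∉ q.support := fun hmem => by
    have := dist_le (q.takeUntil w hmem)
    have := q.length_takeUntil_le_length hmem
    omega
  exact hG.eq_penultimate_of_adj_end hp hadj
    (hG.mem_support_of_ne_mem_support_of_adj_of_isPath hp hq hadj hwq)

theorem IsAcyclic.dist_eq_add_one_of_adj_of_ne (hG : G.IsAcyclic) (hw : G.Reachable u w)
    (hP : G.Adj w P) (hdP : G.dist u P + 1 = G.dist u w) (hq : G.Adj w q) (hqP : q ≠ P) :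
    G.dist u q = G.dist u w + 1 :=
  (hG.dist_eq_dist_add_one_of_adj_of_reachable u hq hw).resolve_left fun h =>
    hqP (hG.eq_of_adj_of_dist_add_one_eq hw hq h.symm hP hdP)

def componentGraph (G : SimpleGraph V) (u : V) : SimpleGraph V where
  Adj x y := G.Adj x y ∧ G.Reachable u x
  symm := ⟨fun _ _ h => ⟨h.1.symm, h.2.trans h.1.reachable⟩⟩
  loopless := ⟨fun x h => G.loopless.irrefl x h.1⟩

lemma componentGraph_le : G.componentGraph u ≤ G := fun _ _ h => h.1

lemma exists_walk_componentGraph {x y : V} (p : G.Walk x y) (hx : G.Reachable u x) :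
    ∃ q : (G.componentGraph u).Walk x y, q.length = p.length := by
  induction p with
  | nil => exact ⟨.nil, rfl⟩
  | cons h _ ih =>
    obtain ⟨q, hq⟩ := ih (hx.trans h.reachable)
    exact ⟨.cons (show (G.componentGraph u).Adj _ _ from ⟨h, hx⟩) q, by simp [hq]⟩

lemma dist_componentGraph {x : V} (hx : G.Reachable u x) :
    (G.componentGraph u).dist u x = G.dist u x := by
  obtain ⟨p, hp⟩ := hx.exists_walk_length_eq_dist
  obtain ⟨q, hq⟩ := exists_walk_componentGraph p (Reachable.refl u)
  exact le_antisymm (hp ▸ hq ▸ dist_le q) (q.reachable.dist_anti componentGraph_le)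

lemma isAcyclic_componentGraph
    (hacyc : ∀ w, G.Reachable u w → ∀ p : G.Walk w w, ¬p.IsCycle) :
    (G.componentGraph u).IsAcyclic := by
  intro v p hp
  cases p with
  | nil => exact hp.ne_nil rfl
  | cons h p' => exact hacyc v h.2 (p'.cons h |>.mapLe componentGraph_le) (hp.mapLe _)

theorem dist_eq_add_one_of_adj_of_ne
    (hacyc : ∀ w, G.Reachable u w → ∀ p : G.Walk w w, ¬p.IsCycle) (hw : G.Reachable u w)
    (hP : G.Adj w P) (hdP : G.dist u P + 1 = G.dist u w) (hq : G.Adj w q) (hqP : q ≠ P) :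
    G.dist u q = G.dist u w + 1 := by
  obtain ⟨r, -⟩ := exists_walk_componentGraph hw.some (Reachable.refl u)
  rw [← dist_componentGraph hw, ← dist_componentGraph (hw.trans hq.reachable)]
  rw [← dist_componentGraph hw, ← dist_componentGraph (hw.trans hP.reachable)] at hdP
  exact (isAcyclic_componentGraph hacyc).dist_eq_add_one_of_adj_of_ne r.reachable ⟨hP, hw⟩ hdP
    ⟨hq, hw⟩ hqP

variable (G) in
/-- The height of `w` in the tree rooted at `u` with vertex set `s`, where `v` counts as lying
below `w` when `w` is on a shortest path from `u` to `v`. -/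
noncomputable def rootedHeight (u : V) (s : Finset V) (w : V) : ℕ :=
  (s.filter fun v => G.dist u v = G.dist u w + G.dist w v).sup (G.dist w)

variable {s : Finset V}

lemma dist_le_rootedHeight {v : V} (hv : v ∈ s) (hvw : G.dist u v = G.dist u w + G.dist w v) :
    G.dist w v ≤ G.rootedHeight u s w :=
  Finset.le_sup (f := G.dist w) (Finset.mem_filter.2 ⟨hv, hvw⟩)

lemma exists_dist_eq_rootedHeight (h : ∃ v ∈ s, G.dist u v = G.dist u w + G.dist w v) :
    ∃ v ∈ s, G.dist u v = G.dist u w + G.dist w v ∧ G.dist w v = G.rootedHeight u s w := by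
  obtain ⟨v, hv, hvw⟩ := h
  have hne : (s.filter fun v => G.dist u v = G.dist u w + G.dist w v).Nonempty :=
    ⟨v, Finset.mem_filter.2 ⟨hv, hvw⟩⟩
  obtain ⟨v, hv, hmax⟩ := Finset.exists_mem_eq_sup _ hne (G.dist w)
  rw [Finset.mem_filter] at hv
  exact ⟨v, hv.1, hv.2, hmax.symm⟩

lemma dist_add_rootedHeight_le {d : ℕ} (hd : ∀ v ∈ s, G.dist u v ≤ d) (hw : w ∈ s) :
    G.dist u w + G.rootedHeight u s w ≤ d := by
  have hwd := hd w hw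
  suffices G.rootedHeight u s w ≤ d - G.dist u w by omega
  refine Finset.sup_le fun v hv => ?_
  rw [Finset.mem_filter] at hv
  have := hd v hv.1
  omega

lemma rootedHeight_add_one_le_of_adj (hw : G.Reachable u w) (hq : q ∈ s) (hadj : G.Adj w q)
    (hdq : G.dist u q = G.dist u w + 1) : G.rootedHeight u s q + 1 ≤ G.rootedHeight u s w := by
  obtain ⟨v, hv, hvq, hmax⟩ :=
    exists_dist_eq_rootedHeight (G := G) (u := u) (w := q) ⟨q, hq, by simp⟩
  have h₁ := hadj.reachable.dist_triangle_left v
  have h₂ := hw.dist_triangle_left v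
  rw [dist_eq_one_iff_adj.2 hadj] at h₁
  have := dist_le_rootedHeight hv (show G.dist u v = G.dist u w + G.dist w v by omega)
  omega

lemma exists_adj_rootedHeight_le (hw : G.Reachable u w) (hpos : 0 < G.rootedHeight u s w) :
    ∃ q, G.Adj w q ∧ G.dist u q = G.dist u w + 1 ∧
      G.rootedHeight u s w ≤ G.rootedHeight u s q + 1 := by
  have hne : ∃ v ∈ s, G.dist u v = G.dist u w + G.dist w v := by
    by_contra! hempty
    simp [rootedHeight, Finset.filter_false_of_mem hempty] at hpos
  obtain ⟨v, hv, hvw, hmax⟩ := exists_dist_eq_rootedHeight hne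
  rw [← hmax] at hpos ⊢
  obtain ⟨hwv, hrv⟩ := dist_ne_zero_iff_ne_and_reachable.1 hpos.ne'
  obtain ⟨p, hp⟩ := hrv.exists_walk_length_eq_dist
  obtain ⟨q, hadj, p', rfl⟩ := p.exists_eq_cons_of_ne hwv
  have hqv := dist_le p'
  have h₁ := hw.dist_triangle_left q
  have h₂ := (hw.trans hadj.reachable).dist_triangle_left v
  rw [dist_eq_one_iff_adj.2 hadj] at h₁
  rw [Walk.length_cons] at hp
  have := dist_le_rootedHeight hv (show G.dist u v = G.dist u q + G.dist q v by omega)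
  exact ⟨q, hadj, by omega, by omega⟩

end SimpleGraph

open SimpleGraph

lemma mem_triNbrs {p q : ℤ × ℤ} :
    q ∈ triNbrs p ↔ q = (p.1 - 1, p.2) ∨ q = (p.1 + 1, p.2) ∨
      q = (p.1, if Even (p.1 + p.2) then p.2 - 1 else p.2 + 1) := by
  simp [triNbrs]

lemma ne_of_mem_triNbrs {p q : ℤ × ℤ} (h : q ∈ triNbrs p) : q ≠ p := by
  rcases mem_triNbrs.1 h with rfl | rfl | rfl <;> simp [Prod.ext_iff]
  split_ifs <;> omega

lemma mem_triNbrs_comm {p q : ℤ × ℤ} (h : q ∈ triNbrs p) : p ∈ triNbrs q := by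
  obtain ⟨i, j⟩ := p
  rcases mem_triNbrs.1 h with rfl | rfl | rfl <;> rw [mem_triNbrs] <;>
    by_cases hij : Even (i + j) <;> simp [hij, Prod.ext_iff, parity_simps] <;> grind

lemma card_triNbrs (p : ℤ × ℤ) : (triNbrs p).card = 3 := by
  rw [triNbrs, Finset.card_insert_of_notMem, Finset.card_insert_of_notMem,
    Finset.card_singleton]
  · simp [Prod.ext_iff]
  · simp [Prod.ext_iff]
    omega

lemma mem_triNbrs_of_triG0_adj {c : ℤ × ℤ → Bool} {p q : ℤ × ℤ}
    (h : (triG0 c).Adj p q) : q ∈ triNbrs p :=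
  h.2.2.2.elim id mem_triNbrs_comm

lemma triG0_adj_of_mem_triNbrs {c : ℤ × ℤ → Bool} {p q : ℤ × ℤ} (hp : c p = false)
    (hq : c q = false) (h : q ∈ triNbrs p) : (triG0 c).Adj p q :=
  ⟨(ne_of_mem_triNbrs h).symm, hp, hq, Or.inl h⟩

lemma triActCount_eq_two {c : ℤ × ℤ → Bool} {w P : ℤ × ℤ} (hP : P ∈ triNbrs w)
    (h : ∀ q ∈ triNbrs w, c q = true ↔ q ≠ P) : triActCount c w = 2 := by
  have : (triNbrs w).filter (fun q => c q = true) = (triNbrs w).erase P := by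
    ext q
    rw [Finset.mem_filter, Finset.mem_erase]
    exact ⟨fun ⟨hq, hcq⟩ => ⟨(h q hq).1 hcq, hq⟩,
      fun ⟨hqP, hq⟩ => ⟨hq, (h q hq).2 hqP⟩⟩
  rw [triActCount, this, Finset.card_erase_of_mem hP, card_triNbrs]

lemma triActCount_lt_two {c : ℤ × ℤ → Bool} {w P q : ℤ × ℤ} (hP : P ∈ triNbrs w)
    (hq : q ∈ triNbrs w) (hqP : q ≠ P) (hcP : c P = false) (hcq : c q = false) :
    triActCount c w < 2 := by
  have hsub : (triNbrs w).filter (fun x => c x = true) ⊆ ((triNbrs w).erase P).erase q := by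
    intro x hx
    rw [Finset.mem_filter] at hx
    simp only [Finset.mem_erase]
    exact ⟨by rintro rfl; simp [hcq] at hx, by rintro rfl; simp [hcP] at hx, hx.1⟩
  have := Finset.card_le_card hsub
  rw [Finset.card_erase_of_mem (Finset.mem_erase.2 ⟨hqP, hq⟩), Finset.card_erase_of_mem hP,
    card_triNbrs] at this
  rw [triActCount]
  omega

section Freezing

variable {I : Finset ℕ} {c : ℤ × ℤ → Bool} {p : ℤ × ℤ}

lemma iterate_ruleT_succ_eq_true {t : ℕ} :
    (ruleT I)^[t + 1] c p = true ↔
      (ruleT I)^[t] c p = true ∨ triActCount ((ruleT I)^[t] c) p ∈ I := by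
  simp [Function.iterate_succ_apply', ruleT]

lemma iterate_ruleT_mono {s t : ℕ} (hst : s ≤ t) (h : (ruleT I)^[s] c p = true) :
    (ruleT I)^[t] c p = true := by
  induction t, hst using Nat.le_induction with
  | base => exact h
  | succ t _ ih => exact iterate_ruleT_succ_eq_true.2 (Or.inl ih)

end Freezing

section Rule2OnTree

variable {c : ℤ × ℤ → Bool} {u : ℤ × ℤ} {s : Finset (ℤ × ℤ)}

theorem rootedHeight_lt_of_iterate_ruleT_eq_true (hstab : isStable (ruleT {2}) c u)
    (hs : ∀ w, (triG0 c).Reachable u w → w ∈ s) {t : ℕ} {w : ℤ × ℤ}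
    (hw : (triG0 c).Reachable u w) (hwu : w ≠ u) (hact : (ruleT {2})^[t] c w = true) :
    (triG0 c).rootedHeight u s w < t := by
  induction t generalizing w with
  | zero =>
    obtain ⟨P, hP, -⟩ := hw.exists_adj_dist_add_one_eq hwu
    simp [hP.2.1] at hact
  | succ t ih =>
    obtain ⟨P, hP, hdP⟩ := hw.exists_adj_dist_add_one_eq hwu
    rcases iterate_ruleT_succ_eq_true.1 hact with hprev | hcount
    · exact (ih hw hwu hprev).trans (Nat.lt_succ_self t)
    by_cases hPact : (ruleT {2})^[t] c P = true
    · have hPu : P ≠ u := by rintro rfl; simp [hstab.2 t] at hPact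
      have := rootedHeight_add_one_le_of_adj (s := s) (hw.trans hP.reachable) (hs w hw)
        hP.symm hdP.symm
      have := ih (hw.trans hP.reachable) hPu hPact
      omega
    obtain hzero | hpos := Nat.eq_zero_or_pos ((triG0 c).rootedHeight u s w)
    · omega
    -- Two active neighbours while the parent is inactive: the highest child is one of them.
    obtain ⟨q, hq, hdq, hle⟩ := exists_adj_rootedHeight_le hw hpos
    have hqP : q ≠ P := by rintro rfl; omega
    have hqact : (ruleT {2})^[t] c q = true := by
      by_contra hqact
      have := triActCount_lt_two (mem_triNbrs_of_triG0_adj hP) (mem_triNbrs_of_triG0_adj hq) hqP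
        (Bool.eq_false_iff.2 hPact) (Bool.eq_false_iff.2 hqact)
      rw [Finset.mem_singleton] at hcount
      omega
    have hqu : q ≠ u := by rintro rfl; simp at hdq
    have := ih (hw.trans hq.reachable) hqu hqact
    omega

theorem iterate_ruleT_rootedHeight_add_one_eq_true (hstab : isStable (ruleT {2}) c u)
    (hs : ∀ w, (triG0 c).Reachable u w → w ∈ s)
    (hacyc : ∀ w, (triG0 c).Reachable u w → ∀ p : (triG0 c).Walk w w, ¬p.IsCycle)
    {w : ℤ × ℤ} (hw : (triG0 c).Reachable u w) (hwu : w ≠ u) :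
    (ruleT {2})^[(triG0 c).rootedHeight u s w + 1] c w = true := by
  induction hm : (triG0 c).rootedHeight u s w using Nat.strong_induction_on generalizing w with
  | _ m ih =>
  obtain ⟨P, hP, hdP⟩ := hw.exists_adj_dist_add_one_eq hwu
  have hPinact : (ruleT {2})^[m] c P ≠ true := by
    by_cases hPu : P = u
    · simp [hPu, hstab.2 m]
    intro hPact
    have := rootedHeight_add_one_le_of_adj (s := s) (hw.trans hP.reachable) (hs w hw)
      hP.symm hdP.symm
    have := rootedHeight_lt_of_iterate_ruleT_eq_true hstab hs (hw.trans hP.reachable) hPu hPact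
    omega
  -- Every other neighbour is either active from the start or a child of lower height.
  have hact : ∀ q ∈ triNbrs w, q ≠ P → (ruleT {2})^[m] c q = true := by
    intro q hq hqP
    cases hcq : c q
    · have hadj := triG0_adj_of_mem_triNbrs hP.2.1 hcq hq
      have hdq := dist_eq_add_one_of_adj_of_ne hacyc hw hP hdP hadj hqP
      have hqu : q ≠ u := by rintro rfl; simp at hdq
      have := rootedHeight_add_one_le_of_adj hw (hs q (hw.trans hadj.reachable)) hadj hdq
      exact iterate_ruleT_mono (by omega) (ih _ (by omega) (hw.trans hadj.reachable) hqu rfl)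
    · exact iterate_ruleT_mono (Nat.zero_le m) hcq
  refine iterate_ruleT_succ_eq_true.2 (Or.inr ?_)
  rw [Finset.mem_singleton]
  exact triActCount_eq_two (mem_triNbrs_of_triG0_adj hP)
    fun q hq => ⟨fun h hqP => hPinact (hqP ▸ h), hact q hq⟩

end Rule2OnTree

theorem stmt7_general (c : ℤ × ℤ → Bool) (u : ℤ × ℤ)
    (hstab2 : isStable (ruleT {2}) c u)
    -- the component is finite
    (s : Finset (ℤ × ℤ)) (hs : ∀ w, (triG0 c).Reachable u w ↔ w ∈ s)
    -- the component is acyclic (hence a tree, being connected by definition)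
    (hacyc : ∀ w, (triG0 c).Reachable u w → ∀ p : (triG0 c).Walk w w, ¬ p.IsCycle)
    -- `d` is the depth of the tree rooted at `u`
    (d : ℕ)
    (hub : ∀ w, (triG0 c).Reachable u w → (triG0 c).dist u w ≤ d) :
    ∀ w, (triG0 c).Reachable u w → w ≠ u → (ruleT {2})^[d] c w = true := by
  intro w hw hwu
  have hpos : 0 < (triG0 c).dist u w := hw.pos_dist_of_ne hwu.symm
  have hdepth := dist_add_rootedHeight_le (fun v hv => hub v ((hs v).2 hv)) ((hs w).1 hw)
  exact iterate_ruleT_mono (by omega)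
    (iterate_ruleT_rootedHeight_add_one_eq_true hstab2 (fun v => (hs v).1) hacyc hw hwu)

/-- triangular grid under rule 2, `c` periodic of even period
`n`. Suppose `u` is stable under rule 2 and the connected component `G[0,u]`
of inactive cells containing `u` is a finite tree; rooting it at `u`, let `d`
be its depth (the maximum distance in the tree from `u` to a leaf, i.e. the
maximum graph distance from `u` to a cell of the component). Then every cell
of `G[0,u]` other than `u` is active after `d` applications of rule 2. -/
theorem stmt7 (n : ℕ) (hn : 0 < n) (hne : Even n) (c : ℤ × ℤ → Bool)
    (hper : Periodic n c) (u : ℤ × ℤ)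
    (hstab2 : isStable (ruleT {2}) c u)
    -- the component is finite
    (s : Finset (ℤ × ℤ)) (hs : ∀ w, (triG0 c).Reachable u w ↔ w ∈ s)
    -- the component is acyclic (hence a tree, being connected by definition)
    (hacyc : ∀ w, (triG0 c).Reachable u w → ∀ p : (triG0 c).Walk w w, ¬ p.IsCycle)
    -- `d` is the depth of the tree rooted at `u`
    (d : ℕ)
    (hub : ∀ w, (triG0 c).Reachable u w → (triG0 c).dist u w ≤ d)
    (hmax : ∃ w, (triG0 c).Reachable u w ∧ (triG0 c).dist u w = d) :
    ∀ w, (triG0 c).Reachable u w → w ≠ u → (ruleT {2})^[d] c w = true :=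
  stmt7_general c u hstab2 s hs hacyc d hub
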